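/- arXiv:0910.0100 — 6 statements merged into one kernel-verified Lean document; each statement's English description precedes it below -/
import Mathlib

section
/- For group elements α, β and nonnegative integers m, n, define {α,β}_m = (αβ)^k(βα)^{-k} if m=2k is even, and {α,β}_m = ((αβ)^kα)((βα)^kβ)^{-1} if m=2k+1 is odd. Then in the free group on α, β, the normal closure of the set {{α,β}_m, {α,β}_n} equals the normal closure of {α,β}_{gcd(m,n)}. Equivalently, the quotient of the free group by the relations {α,β}_m = 1 and {α,β}_n = 1 is isomorphic to the quotient by the single relation {α,β}_{gcd(m,n)} = 1. -/
/-!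
Let the braid generator `σ` (`braidStep`) act on pairs by `(a, b) ↦ (a b a⁻¹, a)`. It preserves
the product `a b`, and `(σ^m (a, b)).1 = a {a,b}_m⁻¹`, so `{a,b}_m = 1` says exactly that `(a, b)`
is a periodic point of `σ` of period `m`. The periods of a point are closed under `gcd` and under
multiples. Applied in `G ⧸ N` for a normal subgroup `N`, this shows that `N` contains `{a,b}_m`
and `{a,b}_n` iff it contains `{a,b}_{gcd(m,n)}`.
-/

/-- The bracket `{a,b}_m`: `(ab)^k (ba)^{-k}` for `m = 2k` and
`((ab)^k a)((ba)^k b)⁻¹` for `m = 2k+1`. -/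
def degtBracket {G : Type*} [Group G] (m : ℕ) (a b : G) : G :=
  if m % 2 = 0 then (a * b) ^ (m / 2) * ((b * a) ^ (m / 2))⁻¹
  else ((a * b) ^ (m / 2) * a) * ((b * a) ^ (m / 2) * b)⁻¹

open Function

section Bracket

variable {G : Type*} [Group G]

lemma degtBracket_zero (a b : G) : degtBracket 0 a b = 1 := by
  simp [degtBracket]

lemma degtBracket_succ (m : ℕ) (a b : G) :
    degtBracket (m + 1) a b = a * (degtBracket m a b)⁻¹ * b⁻¹ := by
  -- with `b = a⁻¹ c`, both `a b` and `b a` are conjugates of `c`, so `group` can compare powers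
  obtain ⟨c, rfl⟩ : ∃ c, b = a⁻¹ * c := ⟨a * b, by group⟩
  have hab : a * (a⁻¹ * c) = c := mul_inv_cancel_left a c
  have hba (k : ℕ) : (a⁻¹ * c * a) ^ k = a⁻¹ * c ^ k * a := by
    simpa using conj_pow (a := a⁻¹) (b := c) (i := k)
  obtain ⟨k, rfl | rfl⟩ := Nat.even_or_odd' m
  · simp only [degtBracket, show (2 * k + 1) % 2 ≠ 0 by omega, show (2 * k) % 2 = 0 by omega,
      show (2 * k + 1) / 2 = k by omega, show 2 * k / 2 = k by omega, if_true, if_false, hab,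
      ← mul_assoc, hba]
    group
  · simp only [degtBracket, show (2 * k + 1 + 1) % 2 = 0 by omega,
      show (2 * k + 1) % 2 ≠ 0 by omega, show (2 * k + 1 + 1) / 2 = k + 1 by omega,
      show (2 * k + 1) / 2 = k by omega, if_true, if_false, hab, ← mul_assoc, hba]
    group

lemma map_degtBracket {H : Type*} [Group H] (f : G →* H) (m : ℕ) (a b : G) :
    f (degtBracket m a b) = degtBracket m (f a) (f b) := by
  unfold degtBracket
  split_ifs <;> simp only [map_mul, map_pow, map_inv]

def braidStep (p : G × G) : G × G := (p.1 * p.2 * p.1⁻¹, p.1)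

lemma braidStep_iterate_fst_mul_snd (m : ℕ) (p : G × G) :
    (braidStep^[m] p).1 * (braidStep^[m] p).2 = p.1 * p.2 := by
  induction m with
  | zero => rfl
  | succ m ih => rw [iterate_succ_apply', ← ih]; simp [braidStep]

lemma braidStep_iterate_fst (m : ℕ) (a b : G) :
    (braidStep^[m] (a, b)).1 = a * (degtBracket m a b)⁻¹ := by
  induction m with
  | zero => simp [degtBracket_zero]
  | succ m ih =>
    rw [iterate_succ_apply', braidStep, braidStep_iterate_fst_mul_snd, ih, degtBracket_succ]
    group

lemma isPeriodicPt_braidStep_iff (m : ℕ) (a b : G) :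
    IsPeriodicPt braidStep m (a, b) ↔ degtBracket m a b = 1 := by
  have hfst := braidStep_iterate_fst m a b
  have hprod := braidStep_iterate_fst_mul_snd m (a, b)
  constructor
  · intro h
    rw [h.eq] at hfst
    simpa using hfst
  · intro h
    rw [h, inv_one, mul_one] at hfst
    rw [hfst, mul_right_inj] at hprod
    exact Prod.ext hfst hprod

lemma degtBracket_mem_iff (N : Subgroup G) [N.Normal] (m : ℕ) (a b : G) :
    degtBracket m a b ∈ N ↔ IsPeriodicPt braidStep m ((a : G ⧸ N), (b : G ⧸ N)) := by
  rw [isPeriodicPt_braidStep_iff, ← QuotientGroup.eq_one_iff, ← QuotientGroup.mk'_apply,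
    map_degtBracket]
  rfl

lemma normalClosure_degtBracket_pair (m n : ℕ) (a b : G) :
    Subgroup.normalClosure {degtBracket m a b, degtBracket n a b} =
      Subgroup.normalClosure {degtBracket (m.gcd n) a b} := by
  have hmem {s : Set G} {k : ℕ} (hk : degtBracket k a b ∈ s) :=
    (degtBracket_mem_iff (Subgroup.normalClosure s) k a b).1 (Subgroup.subset_normalClosure hk)
  refine le_antisymm (Subgroup.normalClosure_le_normal ?_) (Subgroup.normalClosure_le_normal ?_)
  · have hgcd := hmem (Set.mem_singleton (degtBracket (m.gcd n) a b))
    simp only [Set.insert_subset_iff, Set.singleton_subset_iff, SetLike.mem_coe,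
      degtBracket_mem_iff]
    exact ⟨hgcd.trans_dvd (m.gcd_dvd_left n), hgcd.trans_dvd (m.gcd_dvd_right n)⟩
  · have hm := hmem (Set.mem_insert (degtBracket m a b) {degtBracket n a b})
    have hn := hmem (Set.mem_insert_of_mem (degtBracket m a b)
      (Set.mem_singleton (degtBracket n a b)))
    rw [Set.singleton_subset_iff, SetLike.mem_coe, degtBracket_mem_iff]
    exact hm.gcd hn

end Bracket

/-- In the free group on two generators, the normal closure of
`{α,β}_m` and `{α,β}_n` equals the normal closure of `{α,β}_{gcd(m,n)}`. -/
theorem bracket_normalClosure_gcd (m n : ℕ) :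
    Subgroup.normalClosure
        ({degtBracket m (FreeGroup.of (0 : Fin 2)) (FreeGroup.of 1),
          degtBracket n (FreeGroup.of (0 : Fin 2)) (FreeGroup.of 1)} :
          Set (FreeGroup (Fin 2))) =
      Subgroup.normalClosure
        ({degtBracket (Nat.gcd m n) (FreeGroup.of (0 : Fin 2)) (FreeGroup.of 1)} :
          Set (FreeGroup (Fin 2))) :=
  normalClosure_degtBracket_pair m n _ _
end

section
/- Let σ be the automorphism of the free group F = ⟨α, β⟩ given by σ(α) = αβα^{-1}, σ(β) = α. Then for every m ≥ 0 and every group G generated by two elements a, b, the induced endomorphism σ^m descends to the identity on G (i.e., σ^m(α) ↦ a and σ^m(β) ↦ b) if and only if {a,b}_m = 1 in G, where {a,b}_{2k} = (ab)^k(ba)^{-k} and {a,b}_{2k+1} = ((ab)^k a)((ba)^k b)^{-1}. -/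
/-- The Artin generator `σ` of `B₂` acting on the free group `⟨α, β⟩`:
`σ(α) = αβα⁻¹`, `σ(β) = α`. -/
def artinSigma : Monoid.End (FreeGroup (Fin 2)) :=
  FreeGroup.lift fun i =>
    if i = (0 : Fin 2) then FreeGroup.of 0 * FreeGroup.of 1 * (FreeGroup.of 0)⁻¹
    else FreeGroup.of (0 : Fin 2)

section

variable {G : Type*} [Group G]

abbrev evalPair (a b : G) : FreeGroup (Fin 2) →* G :=
  FreeGroup.lift fun i => if i = 0 then a else b

@[simp] theorem evalPair_of_zero (a b : G) : evalPair a b (FreeGroup.of 0) = a := by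
  simp

@[simp] theorem evalPair_of_one (a b : G) : evalPair a b (FreeGroup.of 1) = b := by
  simp

theorem evalPair_artinSigma (a b : G) (x : FreeGroup (Fin 2)) :
    evalPair a b (artinSigma x) = a * evalPair b a x * a⁻¹ := by
  have h : (evalPair a b).comp artinSigma = (MulAut.conj a).toMonoidHom.comp (evalPair b a) := by
    ext i
    fin_cases i <;> simp [artinSigma]
  exact DFunLike.congr_fun h x

theorem evalPair_artinSigma_pow_two_mul (a b : G) (k : ℕ) (x : FreeGroup (Fin 2)) :
    evalPair a b ((artinSigma ^ (2 * k)) x) = (a * b) ^ k * evalPair a b x * ((a * b) ^ k)⁻¹ := by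
  induction k with
  | zero => simp
  | succ k ih =>
    rw [mul_add_one, add_comm, pow_add, Monoid.End.coe_mul, Function.comp_apply, pow_two,
      Monoid.End.coe_mul, Function.comp_apply, evalPair_artinSigma, evalPair_artinSigma, ih,
      pow_succ']
    simp only [mul_inv_rev, mul_assoc]

theorem evalPair_artinSigma_pow_two_mul_add_one (a b : G) (k : ℕ) (x : FreeGroup (Fin 2)) :
    evalPair a b ((artinSigma ^ (2 * k + 1)) x) =
      ((a * b) ^ k * a) * evalPair b a x * ((a * b) ^ k * a)⁻¹ := by
  rw [pow_succ, Monoid.End.coe_mul, Function.comp_apply, evalPair_artinSigma_pow_two_mul,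
    evalPair_artinSigma]
  group

theorem mul_mul_inv_eq_iff_of_mul_eq_mul {w v x y : G} (h : x * v = w * y) :
    w * y * w⁻¹ = x ↔ w = v := by
  rw [mul_inv_eq_iff_eq_mul, ← h, mul_right_inj, eq_comm]

theorem mul_mul_inv_eq_iff_of_mul_eq_mul' {w v x y : G} (h : v * y = x * w) :
    w * y * w⁻¹ = x ↔ w = v := by
  rw [mul_inv_eq_iff_eq_mul, ← h, mul_left_inj]

theorem degtBracket_two_mul (a b : G) (k : ℕ) :
    degtBracket (2 * k) a b = (a * b) ^ k * ((b * a) ^ k)⁻¹ := by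
  simp [degtBracket]

theorem degtBracket_two_mul_add_one (a b : G) (k : ℕ) :
    degtBracket (2 * k + 1) a b = ((a * b) ^ k * a) * ((b * a) ^ k * b)⁻¹ := by
  simp [degtBracket, Nat.add_mod, Nat.add_div]

end

theorem sigma_pow_descends_iff_bracket_general (m : ℕ) {G : Type*} [Group G] (a b : G) :
    (FreeGroup.lift (fun i : Fin 2 => if i = 0 then a else b)
        ((artinSigma ^ m) (FreeGroup.of 0)) = a ∧
     FreeGroup.lift (fun i : Fin 2 => if i = 0 then a else b)
        ((artinSigma ^ m) (FreeGroup.of 1)) = b) ↔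
    degtBracket m a b = 1 := by
  rcases Nat.even_or_odd' m with ⟨k, rfl | rfl⟩
  · rw [evalPair_artinSigma_pow_two_mul, evalPair_artinSigma_pow_two_mul, evalPair_of_zero,
      evalPair_of_one, degtBracket_two_mul, mul_inv_eq_one,
      mul_mul_inv_eq_iff_of_mul_eq_mul (mul_pow_mul a b k).symm,
      mul_mul_inv_eq_iff_of_mul_eq_mul' (mul_pow_mul b a k), and_self]
  · have hb : a * ((b * a) ^ k * b) = (a * b) ^ k * a * b := by rw [← mul_assoc, ← mul_pow_mul]
    have ha : (b * a) ^ k * b * a = b * ((a * b) ^ k * a) := by rw [mul_pow_mul, mul_assoc]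
    rw [evalPair_artinSigma_pow_two_mul_add_one, evalPair_artinSigma_pow_two_mul_add_one,
      evalPair_of_zero, evalPair_of_one, degtBracket_two_mul_add_one, mul_inv_eq_one,
      mul_mul_inv_eq_iff_of_mul_eq_mul hb, mul_mul_inv_eq_iff_of_mul_eq_mul' ha, and_self]

/-- `σ^m` descends to the identity on a two-generated group `G` (sending
`σ^m(α) ↦ a`, `σ^m(β) ↦ b`) iff `{a,b}_m = 1` in `G`. -/
theorem sigma_pow_descends_iff_bracket (m : ℕ) {G : Type*} [Group G] (a b : G)
    (hgen : Subgroup.closure ({a, b} : Set G) = ⊤) :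
    (FreeGroup.lift (fun i : Fin 2 => if i = 0 then a else b)
        ((artinSigma ^ m) (FreeGroup.of 0)) = a ∧
     FreeGroup.lift (fun i : Fin 2 => if i = 0 then a else b)
        ((artinSigma ^ m) (FreeGroup.of 1)) = b) ↔
    degtBracket m a b = 1 :=
  sigma_pow_descends_iff_bracket_general m a b
end

section
/- Let G be a group generated by elements a₁, a₂, a₃ satisfying [a₁a₂, a₃] = 1 and a₂a₁a₂a₃³ = 1. Then G is abelian. -/
/-!
Since `a₂a₁a₂ = a₃⁻³` commutes with `a₃`, and so does `a₁a₂`, their quotient `a₂` commutes with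
`a₃`, and then so does `a₁ = (a₁a₂)a₂⁻¹`. Now `a₂a₁a₂`, a power of `a₃`, commutes with `a₂`, which
after cancelling one `a₂` on each side says that `a₁` and `a₂` commute. A group generated by
pairwise commuting elements is abelian.
-/

theorem Subgroup.mul_comm_of_closure_eq_top {G : Type*} [Group G] {s : Set G}
    (hs : closure s = ⊤) (hcomm : ∀ x ∈ s, ∀ y ∈ s, x * y = y * x) (x y : G) :
    x * y = y * x := by
  have := isMulCommutative_closure hcomm
  have hx : x ∈ closure s := hs ▸ mem_top x
  have hy : y ∈ closure s := hs ▸ mem_top y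
  exact congrArg Subtype.val (mul_comm' (⟨x, hx⟩ : closure s) ⟨y, hy⟩)

theorem Commute.of_mul_left {G : Type*} [Group G] {a b c : G}
    (hab : Commute (a * b) c) (hb : Commute b c) : Commute a c := by
  simpa using hab.mul_left hb.inv_left

theorem commute_of_commute_self_mul_mul {G : Type*} [Group G] {a b : G}
    (h : Commute b (b * a * b)) : Commute a b := by
  have : b * a * b = a * b * b := by simpa [Commute, SemiconjBy, mul_assoc] using h
  exact (mul_right_cancel this).symm

/-- If a group is generated by `a₁, a₂, a₃` with `[a₁a₂, a₃] = 1` and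
`a₂a₁a₂a₃³ = 1`, then it is abelian. -/
theorem abelian_of_adjacent_regions {G : Type*} [Group G] (a1 a2 a3 : G)
    (hgen : Subgroup.closure ({a1, a2, a3} : Set G) = ⊤)
    (hcomm : (a1 * a2) * a3 = a3 * (a1 * a2))
    (hinf : a2 * a1 * a2 * a3 ^ 3 = 1) :
    ∀ x y : G, x * y = y * x := by
  have h12_3 : Commute (a1 * a2) a3 := hcomm
  have h212 : a2 * a1 * a2 = (a3 ^ 3)⁻¹ := eq_inv_of_mul_eq_one_left hinf
  have h212_3 : Commute (a2 * (a1 * a2)) a3 := by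
    rw [← mul_assoc, h212]
    exact (Commute.self_pow a3 3).symm.inv_left
  have h23 : Commute a2 a3 := h212_3.of_mul_left h12_3
  have h13 : Commute a1 a3 := h12_3.of_mul_left h23
  have h12 : Commute a1 a2 :=
    commute_of_commute_self_mul_mul (h212 ▸ (h23.pow_right 3).inv_right)
  refine Subgroup.mul_comm_of_closure_eq_top hgen ?_
  simp only [Set.mem_insert_iff, Set.mem_singleton_iff, forall_eq_or_imp, forall_eq]
  exact ⟨⟨trivial, h12, h13⟩, ⟨h12.symm, trivial, h23⟩, ⟨h13.symm, h23.symm, trivial⟩⟩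
end

section
/- Let G be a group generated by a₁, a₂, a₃ with ρ := a₁a₂a₃, satisfying [a₁a₂, a₃] = 1, [a₁, (a₂a₃)²] = 1, and a₃ρ³ = (a₂a₃)². Then (a₂a₃)² is a central element of G. -/
/-! `w = (a₂a₃)²` commutes with `a₁` and with `a₂a₃`, hence with `ρ = a₁a₂a₃`. The relation at
infinity writes `a₃ = w ρ⁻³`, so `w` commutes with `a₃`, and then with `a₂ = (a₂a₃)a₃⁻¹`. An
element commuting with a generating set is central. -/

theorem Commute.of_mul_right_of_commute {G : Type*} [Group G] {a b c : G}
    (hbc : Commute a (b * c)) (hc : Commute a c) : Commute a b := by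
  simpa using hbc.mul_right hc.inv_right

theorem Subgroup.mem_center_of_commute_of_closure_eq_top {G : Type*} [Group G] {S : Set G}
    (hS : Subgroup.closure S = ⊤) {w : G} (hw : ∀ s ∈ S, Commute s w) :
    w ∈ Subgroup.center G := by
  rw [← Subgroup.centralizer_univ, ← Subgroup.coe_top, ← hS, Subgroup.centralizer_closure]
  exact hw

theorem sq_central_of_D5_relations_general {G : Type*} [Group G] (a1 a2 a3 : G)
    (hgen : Subgroup.closure ({a1, a2, a3} : Set G) = ⊤)
    (h2 : a1 * (a2 * a3) ^ 2 = (a2 * a3) ^ 2 * a1)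
    (hinf : a3 * (a1 * a2 * a3) ^ 3 = (a2 * a3) ^ 2) :
    (a2 * a3) ^ 2 ∈ Subgroup.center G := by
  set w := (a2 * a3) ^ 2
  have hw1 : Commute w a1 := h2.symm
  have hw23 : Commute w (a2 * a3) := (Commute.refl _).pow_left 2
  have hwρ : Commute w (a1 * a2 * a3) := mul_assoc a1 a2 a3 ▸ hw1.mul_right hw23
  have hw3 : Commute w a3 :=
    .of_mul_right_of_commute (hinf ▸ Commute.refl w) (hwρ.pow_right 3)
  have hw2 : Commute w a2 := hw23.of_mul_right_of_commute hw3
  refine Subgroup.mem_center_of_commute_of_closure_eq_top hgen ?_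
  rintro s (rfl | rfl | rfl)
  exacts [hw1.symm, hw2.symm, hw3.symm]

/-- If `G` is generated by `a₁, a₂, a₃` with `[a₁a₂, a₃] = 1`,
`[a₁, (a₂a₃)²] = 1` and `a₃ρ³ = (a₂a₃)²` (where `ρ = a₁a₂a₃`), then
`(a₂a₃)²` is central in `G`. -/
theorem sq_central_of_D5_relations {G : Type*} [Group G] (a1 a2 a3 : G)
    (hgen : Subgroup.closure ({a1, a2, a3} : Set G) = ⊤)
    (h1 : (a1 * a2) * a3 = a3 * (a1 * a2))
    (h2 : a1 * (a2 * a3) ^ 2 = (a2 * a3) ^ 2 * a1)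
    (hinf : a3 * (a1 * a2 * a3) ^ 3 = (a2 * a3) ^ 2) :
    (a2 * a3) ^ 2 ∈ Subgroup.center G :=
  sq_central_of_D5_relations_general a1 a2 a3 hgen h2 hinf
end

section
/- Suppose m₁, ..., m_r ∈ B₃ are braids acting on the free group F = ⟨α₁, α₂, α₃⟩ and κ₁, ..., κ_r ∈ F are elements such that the composition m_r ∘ ⋯ ∘ m₁ is conjugation by ρ^{-k} (ρ = α₁α₂α₃). Define twisted automorphisms m̃ᵢ(α) = κᵢ^{-1}mᵢ(α)κᵢ. If, in a quotient group G of F, the relations m̃ᵢ = id hold for all i = 2, ..., r and ρ^k = κ_r⋯κ₁ holds, then the relation m̃₁ = id also holds in G. In other words, in the presentation ⟨α₁, α₂, α₃ | m̃ᵢ = id (i = 1,...,r), ρ^k = κ_r⋯κ₁⟩, any one of the braid relations m̃ᵢ = id may be omitted. -/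
private lemma conj_chain {F G : Type*} [Group F] [Group G] (π : F →* G)
    (P : List (MulAut F × F))
    (h : ∀ p ∈ P, ∀ x, π (p.2 * x * p.2⁻¹) = π (p.1 x)) :
    ∀ x, π (((P.map Prod.fst).reverse.prod : MulAut F) x) =
      π ((P.map Prod.snd).reverse.prod * x * ((P.map Prod.snd).reverse.prod)⁻¹) := by
  induction P with
  | nil => simp
  | cons p t ih =>
    intro x
    have hp := h p (List.mem_cons_self)
    have ht := ih (fun q hq => h q (List.mem_cons_of_mem p hq))
    simp only [List.map_cons, List.reverse_cons, List.prod_append, List.prod_cons,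
      List.prod_nil, mul_one]
    have : ((t.map Prod.fst).reverse.prod * p.1 : MulAut F) x
        = ((t.map Prod.fst).reverse.prod : MulAut F) (p.1 x) := rfl
    rw [this, ht (p.1 x)]
    simp only [map_mul, map_inv]
    rw [← hp x]
    simp [map_mul, map_inv, mul_assoc]

/-- Zariski–van Kampen with slopes: one of the twisted braid relations may be
omitted.  Here `F = ⟨α₁,α₂,α₃⟩`, the `m i` are automorphisms of `F` fixing
`ρ = α₁α₂α₃` whose composition `m_r ∘ ⋯ ∘ m₁` is conjugation by `ρ^{-k}`,
`κ i ∈ F` are the slopes, and `π : F → G` is the quotient projection.  If the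
twisted relations `κᵢ x κᵢ⁻¹ = mᵢ(x)` hold in `G` for all `i ≠ d` together
with the relation at infinity `ρ^k = κ_r ⋯ κ₁`, then the twisted relation for
`i = d` also holds in `G`. -/
theorem omit_one_braid_relation (r k : ℕ)
    (m : Fin r → MulAut (FreeGroup (Fin 3))) (κ : Fin r → FreeGroup (Fin 3))
    {G : Type*} [Group G] (π : FreeGroup (Fin 3) →* G)
    (hsurj : Function.Surjective π)
    (ρ : FreeGroup (Fin 3))
    (hρ : ρ = FreeGroup.of 0 * FreeGroup.of 1 * FreeGroup.of 2)
    (hfix : ∀ i, m i ρ = ρ)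
    (hcomp : ∀ x, ((List.ofFn m).reverse.prod : MulAut (FreeGroup (Fin 3))) x =
      ρ ^ k * x * (ρ ^ k)⁻¹)
    (hinf : π ((List.ofFn κ).reverse.prod) = π (ρ ^ k))
    (d : Fin r)
    (hrel : ∀ i, i ≠ d → ∀ x, π (κ i * x * (κ i)⁻¹) = π (m i x)) :
    ∀ x, π (κ d * x * (κ d)⁻¹) = π (m d x) := by
  intro x
  let P : List (MulAut (FreeGroup (Fin 3)) × FreeGroup (Fin 3)) :=
    List.ofFn (fun i => (m i, κ i))
  have hPlen : P.length = r := List.length_ofFn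
  have hd : (d : ℕ) < P.length := lt_of_lt_of_eq d.isLt hPlen.symm
  have hPd : P[(d : ℕ)] = (m d, κ d) := by simp [P]
  have hsplit : P = P.take d ++ (m d, κ d) :: P.drop (d + 1) := by
    conv_lhs => rw [← List.take_append_drop (d : ℕ) P]
    rw [List.drop_eq_getElem_cons hd, hPd]
  have hmemA : ∀ p ∈ P.drop ((d : ℕ) + 1), ∀ y, π (p.2 * y * p.2⁻¹) = π (p.1 y) := by
    intro p hp y
    rcases List.mem_iff_getElem.1 hp with ⟨j, hj, hjp⟩
    rw [List.getElem_drop] at hjp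
    have hjlt : j < P.length - ((d : ℕ) + 1) := by simpa using hj
    have hj' : (d : ℕ) + 1 + j < r := by omega
    have hpe : p = (m ⟨(d : ℕ) + 1 + j, hj'⟩, κ ⟨(d : ℕ) + 1 + j, hj'⟩) := by
      rw [← hjp]; simp [P]
    subst hpe
    exact hrel _ (by simp only [ne_eq, Fin.ext_iff]; omega) y
  have hmemB : ∀ p ∈ P.take (d : ℕ), ∀ y, π (p.2 * y * p.2⁻¹) = π (p.1 y) := by
    intro p hp y
    rcases List.mem_iff_getElem.1 hp with ⟨j, hj, hjp⟩
    have hjd : j < (d : ℕ) := by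
      have h2 : j < min (d : ℕ) P.length := by simpa using hj
      omega
    rw [List.getElem_take] at hjp
    have hj' : j < r := lt_trans hjd d.isLt
    have hpe : p = (m ⟨j, hj'⟩, κ ⟨j, hj'⟩) := by rw [← hjp]; simp [P]
    subst hpe
    exact hrel _ (by simp only [ne_eq, Fin.ext_iff]; omega) y
  have chainA := conj_chain π _ hmemA
  have chainB := conj_chain π _ hmemB
  simp only [List.map_drop, List.map_take] at chainA chainB
  set MA : MulAut (FreeGroup (Fin 3)) :=
    ((P.map Prod.fst).drop ((d : ℕ) + 1)).reverse.prod with hMA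
  set MB : MulAut (FreeGroup (Fin 3)) :=
    ((P.map Prod.fst).take (d : ℕ)).reverse.prod with hMB
  set KA : FreeGroup (Fin 3) := ((P.map Prod.snd).drop ((d : ℕ) + 1)).reverse.prod
  set KB : FreeGroup (Fin 3) := ((P.map Prod.snd).take (d : ℕ)).reverse.prod
  have hMfst : (List.ofFn m) = P.map Prod.fst := by simp [P, List.map_ofFn]; rfl
  have hKsnd : (List.ofFn κ) = P.map Prod.snd := by simp [P, List.map_ofFn]; rfl
  have hMprod : ((List.ofFn m).reverse.prod : MulAut (FreeGroup (Fin 3)))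
      = MA * (m d) * MB := by
    rw [hMfst]; conv_lhs => rw [hsplit]
    simp [List.prod_append, mul_assoc]; rfl
  have hKprod : ((List.ofFn κ).reverse.prod : FreeGroup (Fin 3)) = KA * κ d * KB := by
    rw [hKsnd]; conv_lhs => rw [hsplit]
    simp [List.prod_append, mul_assoc]; rfl
  set z : FreeGroup (Fin 3) := MB⁻¹ x with hz
  have hMBz : MB z = x := by simp [hz]
  have h1 : π (MA (m d x)) = π (ρ ^ k) * π z * (π (ρ ^ k))⁻¹ := by
    have hc := hcomp z
    rw [hMprod] at hc
    have heq : (MA * (m d) * MB : MulAut (FreeGroup (Fin 3))) z = MA (m d x) := by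
      simp [MulAut.mul_apply, hMBz]
    rw [heq] at hc
    rw [hc]; simp [map_mul]
  have h2 : π (MA (m d x)) = π KA * π (m d x) * (π KA)⁻¹ := by
    rw [chainA (m d x)]; simp [map_mul]
  have h3 : π x = π KB * π z * (π KB)⁻¹ := by
    have hb := chainB z
    rw [hMBz] at hb
    rw [hb]; simp [map_mul]
  have hρk : π (ρ ^ k) = π KA * π (κ d) * π KB := by
    rw [← hinf, hKprod]; simp [map_mul, mul_assoc]
  have hz' : π z = (π KB)⁻¹ * π x * π KB := by rw [h3]; group
  have key : π KA * π (m d x) * (π KA)⁻¹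
      = π KA * (π (κ d) * π x * (π (κ d))⁻¹) * (π KA)⁻¹ := by
    rw [← h2, h1, hρk, hz']; group
  have hfin : π (m d x) = π (κ d) * π x * (π (κ d))⁻¹ :=
    mul_left_cancel (mul_right_cancel key)
  rw [hfin]; simp [map_mul]
end

section
/- In the setting of the Zariski–van Kampen presentation with slopes: with hypotheses as in the previous statement (braid monodromies m₁,...,m_r ∈ B₃ fixing ρ, composing to conjugation by ρ^{-k}, and slopes κ₁,...,κ_r), modulo all but one of the twisted braid relations m̃ᵢ = id, the slopes cyclically commute: κ_r⋯κ₂κ₁ = κ_{d-1}⋯κ₁κ_r⋯κ_d in the quotient group, for each d = 2, ..., r. In particular, when only two slopes κ₁, κ₂ are nontrivial, κ₂κ₁ = κ₁κ₂ in the quotient and the order of the slopes in the relation at infinity ρ^k = κ₂κ₁ is irrelevant. -/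
/-!
For `i ≠ d` the twisted braid relation `m̃ᵢ = id`, evaluated at `ρ` (which `mᵢ` fixes),
says that `κᵢ` commutes with `ρ` in the quotient. The relation at infinity writes `κ_d` as a
product of `ρ^k` and of the other slopes, so `κ_d` commutes with `ρ` as well. Hence every slope
commutes with `ρ^k = κ_r ⋯ κ₁`, and a product whose factors all commute with it is invariant
under rotation.
-/

namespace List

theorem prod_rotate_of_forall_commute {M : Type*} [LeftCancelMonoid M] {l : List M}
    (h : ∀ x ∈ l, Commute x l.prod) (n : ℕ) : (l.rotate n).prod = l.prod := by
  induction n with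
  | zero => rw [rotate_zero]
  | succ n ih =>
    rw [← rotate_rotate, ← ih]
    match hl : l.rotate n with
    | [] => rfl
    | a :: t =>
      have ha : Commute a t.prod := by
        refine (IsLeftRegular.all a).commute_mul_left_iff.mp (Commute.symm ?_)
        rw [← prod_cons, ← hl, ih]
        exact h a (mem_rotate.mp (hl ▸ mem_cons_self))
      rw [rotate_cons_succ, rotate_zero, prod_append, prod_singleton, prod_cons]
      exact ha.eq.symm

theorem apply_mem_of_prod_map_mem {ι G : Type*} [Group G] {H : Subgroup G} {s : List ι}
    (hs : s.Nodup) {f : ι → G} {d : ι} (hd : d ∈ s) (hf : ∀ i ∈ s, i ≠ d → f i ∈ H)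
    (hprod : (s.map f).prod ∈ H) : f d ∈ H := by
  have hsub : ∀ t ⊆ s, d ∉ t → (t.map f).prod ∈ H := fun t hts hdt =>
    H.list_prod_mem <| forall_mem_map.mpr fun i hi => hf i (hts hi) (ne_of_mem_of_not_mem hi hdt)
  obtain ⟨s₁, s₂, rfl⟩ := append_of_mem hd
  obtain ⟨⟨hd₁, hd₂⟩, -⟩ : (d ∉ s₁ ∧ d ∉ s₂) ∧ _ := by
    simpa [nodup_middle, nodup_cons] using hs
  have hprod₁ := hsub s₁ (by simp) hd₁
  have hprod₂ := hsub s₂ (by simp) hd₂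
  rw [map_append, map_cons, prod_append, prod_cons] at hprod
  exact (H.mul_mem_cancel_right hprod₂).mp ((H.mul_mem_cancel_left hprod₁).mp hprod)

end List

theorem slopes_cyclically_commute_general (r k : ℕ)
    (m : Fin r → MulAut (FreeGroup (Fin 3))) (κ : Fin r → FreeGroup (Fin 3))
    {G : Type*} [Group G] (π : FreeGroup (Fin 3) →* G)
    (ρ : FreeGroup (Fin 3))
    (hfix : ∀ i, m i ρ = ρ)
    (hinf : π ((List.ofFn κ).reverse.prod) = π (ρ ^ k))
    (d : Fin r)
    (hrel : ∀ i, i ≠ d → ∀ x, π (κ i * x * (κ i)⁻¹) = π (m i x)) :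
    ∀ n : ℕ,
      π (((List.ofFn κ).reverse.rotate n).prod) = π ((List.ofFn κ).reverse.prod) := by
  intro n
  set C := Subgroup.centralizer {π ρ}
  have hκ : ∀ i, i ≠ d → π (κ i) ∈ C := fun i hi => by
    have h := hrel i hi ρ
    rw [hfix, map_mul, map_mul, map_inv, mul_inv_eq_iff_eq_mul] at h
    exact Subgroup.mem_centralizer_singleton_iff.mpr h
  have hκd : π (κ d) ∈ C := by
    refine List.apply_mem_of_prod_map_mem (s := (List.finRange r).reverse) (f := π ∘ κ)
      (List.nodup_reverse.mpr (List.nodup_finRange r)) (by simp) (fun i _ hi => hκ i hi) ?_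
    rw [← List.map_map, List.map_reverse, ← List.ofFn_eq_map, ← map_list_prod, hinf, map_pow]
    exact C.pow_mem (Subgroup.mem_centralizer_singleton_iff.mpr rfl) k
  have hall : ∀ i, Commute (π (κ i)) (π ρ) := fun i =>
    Subgroup.mem_centralizer_singleton_iff.mp (if hi : i = d then hi ▸ hκd else hκ i hi)
  rw [map_list_prod, map_list_prod, List.map_rotate]
  refine List.prod_rotate_of_forall_commute (fun x hx => ?_) n
  obtain ⟨i, rfl⟩ : ∃ i, π (κ i) = x := by simpa using hx
  rw [← map_list_prod, hinf, map_pow]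
  exact (hall i).pow_right k

/-- Modulo all but one of the twisted braid relations and the relation at
infinity, the slopes cyclically commute: any cyclic rotation of the product
`κ_r ⋯ κ₁` has the same image in the quotient group.  In particular, with only
two nontrivial slopes their order in the relation at infinity is irrelevant. -/
theorem slopes_cyclically_commute (r k : ℕ)
    (m : Fin r → MulAut (FreeGroup (Fin 3))) (κ : Fin r → FreeGroup (Fin 3))
    {G : Type*} [Group G] (π : FreeGroup (Fin 3) →* G)
    (hsurj : Function.Surjective π)
    (ρ : FreeGroup (Fin 3))
    (hρ : ρ = FreeGroup.of 0 * FreeGroup.of 1 * FreeGroup.of 2)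
    (hfix : ∀ i, m i ρ = ρ)
    (hcomp : ∀ x, ((List.ofFn m).reverse.prod : MulAut (FreeGroup (Fin 3))) x =
      ρ ^ k * x * (ρ ^ k)⁻¹)
    (hinf : π ((List.ofFn κ).reverse.prod) = π (ρ ^ k))
    (d : Fin r)
    (hrel : ∀ i, i ≠ d → ∀ x, π (κ i * x * (κ i)⁻¹) = π (m i x)) :
    ∀ n : ℕ,
      π (((List.ofFn κ).reverse.rotate n).prod) = π ((List.ofFn κ).reverse.prod) :=
  slopes_cyclically_commute_general r k m κ π ρ hfix hinf d hrel
end
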